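/- arXiv:0902.2467 — 2 statements merged into one kernel-verified Lean document; each statement's English description precedes it below -/
import Mathlib

section
/- Let A be a commutative ring and let I ⊆ J be ideals of A. Then ht(I) + ht(J/I) ≤ ht(J), where J/I denotes the image of J in the quotient ring A/I. -/
noncomputable section

/-- Height of an ideal: the infimum of the heights of the prime ideals containing it,
the height of a prime being taken in the prime spectrum ordered by inclusion. -/
def idealHt {R : Type*} [CommRing R] (I : Ideal R) : ℕ∞ :=
  ⨅ P : { P : PrimeSpectrum R // I ≤ P.asIdeal }, Order.height P.1

/-!
A prime `P ⊇ J` of `A` is the preimage of a prime `Q ⊇ J/I` of `A/I`. A chain of primes of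
`A/I` ending at `Q` pulls back to a chain of primes of `A` of the same length, ending at `P`
and starting at a prime containing `I`, whose height is at least `ht I`. Concatenating with
chains below that starting prime gives `ht I + height Q ≤ height P`.
-/

namespace Order

variable {α β : Type*} [Preorder α] [Preorder β]

lemma height_head_add_length_le_height_last (q : LTSeries α) :
    height q.head + q.length ≤ height q.last := by
  have : Nonempty { p : LTSeries α // p.last = q.head } := ⟨RelSeries.singleton _ _, rfl⟩
  rw [height_eq_iSup_last_eq, iSup_subtype', ENat.iSup_add]
  exact iSup_le fun ⟨p, hp⟩ => by simpa using length_le_height_last (p := p.smash q hp)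

lemma add_height_le_height_apply_of_strictMono {f : α → β} (hf : StrictMono f) {c : ℕ∞}
    (hc : ∀ x, c ≤ height (f x)) (a : α) : c + height a ≤ height (f a) := by
  have : Nonempty { p : LTSeries α // p.last = a } := ⟨RelSeries.singleton _ _, rfl⟩
  rw [height_eq_iSup_last_eq a, iSup_subtype', ENat.add_iSup]
  refine iSup_le fun ⟨q, hq⟩ => ?_
  calc c + q.length ≤ height (q.map f hf).head + (q.map f hf).length :=
        add_le_add (hc _) le_rfl
    _ ≤ height (q.map f hf).last := height_head_add_length_le_height_last _
    _ = height (f a) := by rw [LTSeries.last_map, hq]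

end Order

lemma idealHt_le_height {R : Type*} [CommRing R] {I : Ideal R} {P : PrimeSpectrum R}
    (hIP : I ≤ P.asIdeal) : idealHt I ≤ Order.height P :=
  iInf_le (fun P : { P : PrimeSpectrum R // I ≤ P.asIdeal } => Order.height P.1) ⟨P, hIP⟩

/-- For ideals `I ⊆ J` of a commutative ring `A`,
`ht I + ht (J/I) ≤ ht J`, where `J/I` is the image of `J` in `A/I`. -/
theorem stmt_4 (A : Type) [CommRing A] (I J : Ideal A) (hIJ : I ≤ J) :
    idealHt I + idealHt (J.map (Ideal.Quotient.mk I)) ≤ idealHt J := by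
  refine le_iInf fun ⟨P, hJP⟩ => ?_
  have hsurj := Ideal.Quotient.mk_surjective (I := I)
  obtain ⟨Q, rfl⟩ : P ∈ Set.range (PrimeSpectrum.comap (Ideal.Quotient.mk I)) := by
    rw [range_comap_of_surjective _ _ hsurj, Ideal.mk_ker]
    exact hIJ.trans hJP
  calc idealHt I + idealHt (J.map (Ideal.Quotient.mk I)) ≤ idealHt I + Order.height Q :=
        add_le_add le_rfl (idealHt_le_height (Ideal.map_le_iff_le_comap.mpr hJP))
    _ ≤ Order.height (PrimeSpectrum.comap (Ideal.Quotient.mk I) Q) :=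
        Order.add_height_le_height_apply_of_strictMono
          (RingHom.strictMono_comap_of_surjective hsurj)
          (fun _ => idealHt_le_height (Ideal.mk_ker.symm.trans_le (Ideal.ker_le_comap _))) Q
end
end

section
/- Let A be an AF-domain. If A is catenarian, then the quotient A/p is an AF-domain for each prime ideal p of A. -/
/-! For primes `p ⊆ q` of `A`, catenarity gives `ht p + ht (q/p) = ht q` and
`(A/p)/(q/p) ≅ A/q`. Adding `ht p` to the required identity `ht (q/p) + t.d.(A/q) = t.d.(A/p)`
turns it into the AF identities for `q` and for `p`; `ht p` can be cancelled because it is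
finite, `t.d.(A)` being finite. -/

open TensorProduct

noncomputable section

/-- Transcendence degree of the `R`-algebra `A` as a cardinal: the supremum of the
cardinalities of algebraically independent subsets of `A` over `R`. -/
def trdegC (R A : Type*) [CommRing R] [CommRing A] [Algebra R A] : Cardinal :=
  ⨆ s : { s : Set A // AlgebraicIndependent R ((↑) : s → A) }, Cardinal.mk s.1

/-- Transcendence degree of the `R`-algebra `A`, as an extended natural number. -/
def eTrdeg (R A : Type*) [CommRing R] [CommRing A] [Algebra R A] : ℕ∞ :=
  Cardinal.toENat (trdegC R A)

/-- The extension `p[n]` of an ideal `p` of `A` to the polynomial ring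
`A[X_1, ..., X_n]`. -/
def polyExt {A : Type*} [CommRing A] (n : ℕ) (p : Ideal A) : Ideal (MvPolynomial (Fin n) A) :=
  p.map (MvPolynomial.C : A →+* MvPolynomial (Fin n) A)

/-- An AF-domain over `k`: a `k`-algebra which is an integral domain such that
`ht p + t.d.(A/p) = t.d.(A)` for every prime ideal `p` of `A`. -/
def IsAFDomain (k A : Type*) [Field k] [CommRing A] [IsDomain A] [Algebra k A] : Prop :=
  ∀ p : Ideal A, p.IsPrime → idealHt p + eTrdeg k (A ⧸ p) = eTrdeg k A

/-- A catenarian domain: `ht p + ht (q/p) = ht q` for all primes `p ⊆ q`. -/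
def IsCatenarian (R : Type*) [CommRing R] : Prop :=
  ∀ p q : Ideal R, p.IsPrime → q.IsPrime → p ≤ q →
    idealHt p + idealHt (q.map (Ideal.Quotient.mk p)) = idealHt q

theorem AlgEquiv.eTrdeg_eq {k A B : Type*} [CommRing k] [CommRing A] [CommRing B]
    [Algebra k A] [Algebra k B] (e : A ≃ₐ[k] B) : eTrdeg k A = eTrdeg k B := by
  have h := congrArg Cardinal.toENat e.lift_trdeg_eq
  rwa [Cardinal.toENat_lift, Cardinal.toENat_lift] at h

theorem eTrdeg_quotient_map_mk {R A : Type*} [CommRing R] [CommRing A] [Algebra R A]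
    {p q : Ideal A} (hpq : p ≤ q) :
    eTrdeg R ((A ⧸ p) ⧸ q.map (Ideal.Quotient.mk p)) = eTrdeg R (A ⧸ q) :=
  (DoubleQuot.quotQuotEquivQuotOfLEₐ R hpq).eTrdeg_eq

theorem IsAFDomain.idealHt_map_mk_add_eTrdeg {k A : Type*} [Field k] [CommRing A] [IsDomain A]
    [Algebra k A] (hfin : eTrdeg k A ≠ ⊤) (hAF : IsAFDomain k A) (hcat : IsCatenarian A)
    {p q : Ideal A} [hp : p.IsPrime] [hq : q.IsPrime] (hpq : p ≤ q) :
    idealHt (q.map (Ideal.Quotient.mk p)) + eTrdeg k (A ⧸ q) = eTrdeg k (A ⧸ p) := by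
  have htp : idealHt p ≠ ⊤ := fun h => hfin (by rw [← hAF p hp, h, top_add])
  refine ENat.add_right_injective_of_ne_top htp ?_
  dsimp only
  rw [← add_assoc, hcat p q hp hq hpq, hAF q hq, hAF p hp]

/-- If `A` is a catenarian AF-domain, then `A/p` is an AF-domain for each
prime ideal `p` of `A`. -/
theorem stmt_7 (k A : Type) [Field k] [CommRing A] [IsDomain A] [Algebra k A]
    (hfin : eTrdeg k A ≠ ⊤)
    (hAF : IsAFDomain k A) (hcat : IsCatenarian A)
    (p : Ideal A) [hp : p.IsPrime] :
    IsAFDomain k (A ⧸ p) := by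
  intro q' hq'
  set q := q'.comap (Ideal.Quotient.mk p)
  have : q.IsPrime := hq'.comap _
  have hpq : p ≤ q := Ideal.mk_ker.symm.trans_le (Ideal.comap_mono bot_le)
  have hmap : q.map (Ideal.Quotient.mk p) = q' :=
    Ideal.map_comap_of_surjective _ Ideal.Quotient.mk_surjective q'
  have key := hAF.idealHt_map_mk_add_eTrdeg hfin hcat hpq
  rwa [← eTrdeg_quotient_map_mk (R := k) hpq, hmap] at key
end
end
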